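/- arXiv:1703.01993 — 4 statements merged into one kernel-verified Lean document; each statement's English description precedes it below -/
import Mathlib

section
/- Let f be an indefinite binary quadratic form of discriminant Δ and let (t,u) be the fundamental solution of |t²−Δu²|=4, and let uf denote the form with all coefficients multiplied by u. If f is Z-reduced, then β(f)=β(uf) and σ(f)=σ(uf); if f is in G⁺, then γ(f)=γ(uf). -/
/-- A binary quadratic form `A x² + B x y + C y²` with integer coefficients. -/
structure QF where
  a : ℤ
  b : ℤ
  c : ℤ

/-- The discriminant `B² - 4AC` of a form. -/
def QF.disc (f : QF) : ℤ := f.b ^ 2 - 4 * f.a * f.c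

/-- The action of a matrix `[[α, β], [γ, δ]]` on a form:
`f(x,y) ↦ f(αx + βy, γx + δy)`. -/
def QF.transform (f : QF) (α β γ δ : ℤ) : QF :=
  ⟨f.a * α ^ 2 + f.b * α * γ + f.c * γ ^ 2,
   2 * f.a * α * β + f.b * (α * δ + β * γ) + 2 * f.c * γ * δ,
   f.a * β ^ 2 + f.b * β * δ + f.c * δ ^ 2⟩

/-- A form is indefinite if its discriminant is positive and not a perfect square. -/
def QF.IsIndefinite (f : QF) : Prop := 0 < f.disc ∧ ¬ IsSquare f.disc

/-- An indefinite form `(A,B,C)` is Z-reduced if `A,B,C > 0` and `B > A + C`. -/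
def QF.IsZReduced (f : QF) : Prop :=
  f.IsIndefinite ∧ 0 < f.a ∧ 0 < f.b ∧ 0 < f.c ∧ f.a + f.c < f.b

/-- An indefinite form `(A,B,C)` is G-reduced if `AC < 0` and `B > |A + C|`. -/
def QF.IsGReduced (f : QF) : Prop :=
  f.IsIndefinite ∧ f.a * f.c < 0 ∧ |f.a + f.c| < f.b

/-- G-reduced with `A > 0`. -/
def QF.IsGPlus (f : QF) : Prop := f.IsGReduced ∧ 0 < f.a

/-- G-reduced with `A < 0`. -/
def QF.IsGMinus (f : QF) : Prop := f.IsGReduced ∧ f.a < 0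

/-- `(t, u)` is the fundamental solution of `|t² - Δ u²| = 4`:
a solution in positive integers with `u` minimal. -/
def IsFundSol (Δ t u : ℤ) : Prop :=
  0 < t ∧ 0 < u ∧ |t ^ 2 - Δ * u ^ 2| = 4 ∧
    ∀ t' u' : ℤ, 0 < t' → 0 < u' → |t' ^ 2 - Δ * u' ^ 2| = 4 → u ≤ u'

/-- The continuant of a finite sequence of integers. -/
def cont : List ℤ → ℤ
  | [] => 1
  | [q] => q
  | q :: r :: t => q * cont (r :: t) + cont t

/-- `L` is the list of partial quotients of a regular continued fraction expansion of
the rational number `x`: all partial quotients are positive and the value of the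
continued fraction, namely `cont L / cont L.tail`, equals `x`. -/
def IsCF (x : ℚ) (L : List ℤ) : Prop :=
  L ≠ [] ∧ (∀ q ∈ L, 0 < q) ∧ (cont L : ℚ) = x * cont L.tail

/-- The bead sequence `β(f)` of a Z-reduced form `f = (A,B,C)` of discriminant `Δ`:
with `(t,u)` the fundamental solution of `|t² - Δu²| = 4` and `z = (t + Bu)/2`,
it is the continued fraction expansion of `z/(z - Au)` whose number of partial
quotients is even if `t² - Δu² = -4` and odd otherwise. -/
def QF.IsBeta (f : QF) (L : List ℤ) : Prop :=
  ∃ t u : ℤ, IsFundSol f.disc t u ∧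
    IsCF ((((t + f.b * u : ℤ) : ℚ) / 2) / ((((t + f.b * u : ℤ) : ℚ) / 2) - ((f.a * u : ℤ) : ℚ))) L ∧
    (t ^ 2 - f.disc * u ^ 2 = -4 → Even L.length) ∧
    (t ^ 2 - f.disc * u ^ 2 = 4 → Odd L.length)

/-- Dirichlet's map `γ(f)` for `f = (A,B,C)` in `G⁺` of discriminant `Δ`:
with `(t,u)` the fundamental solution of `|t² - Δu²| = 4` and `z = (t + Bu)/2`,
it is the continued fraction expansion of `z/(Au)` whose number of partial
quotients is odd if `t² - Δu² = -4` and even otherwise. -/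
def QF.IsGamma (f : QF) (L : List ℤ) : Prop :=
  ∃ t u : ℤ, IsFundSol f.disc t u ∧
    IsCF ((((t + f.b * u : ℤ) : ℚ) / 2) / ((f.a * u : ℤ) : ℚ)) L ∧
    (t ^ 2 - f.disc * u ^ 2 = -4 → Odd L.length) ∧
    (t ^ 2 - f.disc * u ^ 2 = 4 → Even L.length)

/-- The stars-and-bars map: `(q₁, …, q_l)` is sent to the binary string of length
`q₁ + ⋯ + q_l - 1` whose `j`-th character is `1` exactly at the partial sums
`q₁, q₁ + q₂, …, q₁ + ⋯ + q_{l-1}`. -/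
def sb : List ℤ → List Bool
  | [] => []
  | [q] => List.replicate (q - 1).toNat false
  | q :: r :: t => List.replicate (q - 1).toNat false ++ true :: sb (r :: t)

/-- `σ(f) = sb(β(f))`. -/
def QF.IsSigma (f : QF) (s : List Bool) : Prop :=
  ∃ L : List ℤ, f.IsBeta L ∧ s = sb L

/-- Zagier's reduction operator: `f ↦ f(nx + y, -x)` with `n = ⌈(B + √Δ)/(2A)⌉`. -/
noncomputable def RZ (f : QF) : QF :=
  f.transform ⌈((f.b : ℝ) + Real.sqrt (f.disc : ℝ)) / (2 * (f.a : ℝ))⌉ 1 (-1) 0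

/-- The number `δ` in Gauss's reduction operator: `|δ| = ⌊(B + √Δ)/(2|A|)⌋` with
`δ` having the sign of `A`. -/
noncomputable def gaussDelta (f : QF) : ℤ :=
  f.a.sign * ⌊((f.b : ℝ) + Real.sqrt (f.disc : ℝ)) / (2 * |(f.a : ℝ)|)⌋

/-- Gauss's reduction operator: `f ↦ f(δx + y, -x)`. -/
noncomputable def RG (f : QF) : QF := f.transform (gaussDelta f) 1 (-1) 0

/-- Add `1` to the last entry of a list. -/
def addLast : List ℤ → List ℤ
  | [] => []
  | [q] => [q + 1]
  | q :: r :: t => q :: addLast (r :: t)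

/-- Subtract `1` from the last entry of a list. -/
def subLast : List ℤ → List ℤ
  | [] => []
  | [q] => [q - 1]
  | q :: r :: t => q :: subLast (r :: t)

/-- Subtract `1` from the first entry of a list. -/
def decHead : List ℤ → List ℤ
  | [] => []
  | q :: t => (q - 1) :: t

/-- The operator `T_Z`: `(q₁,…,q_l) ↦ (q₁-1, q₂, …, q_{l-1}, q_l+1)` if `q₁ ≥ 2`;
`(q₂, q₁)` if `q₁ = 1` and `l = 2`; `(q₃, …, q_l, q₂, q₁)` if `q₁ = 1` and `l > 2`. -/
def TZ : List ℤ → List ℤ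
  | [] => []
  | [q] => [q]
  | q :: r :: s => if q = 1 then s ++ [r, 1] else (q - 1) :: addLast (r :: s)

/-- The map `μ` from G-reduced forms to Z-reduced forms. -/
def mu (f : QF) : QF :=
  if 0 < f.a then ⟨f.a, 2 * f.a + f.b, f.a + f.b + f.c⟩
  else ⟨f.a + f.b + f.c, f.b + 2 * f.c, f.c⟩

/-- The section `τ` of `β`: `τ((q₁,…,q_l)) = (A,B,C)` with `A = [q₁-1, q₂, …, q_l]`,
`C = [q₁, …, q_{l-1}, q_l - 1]`, `B = [q₁,…,q_l] + [q₁-1, q₂, …, q_{l-1}, q_l-1]`. -/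
def tau (L : List ℤ) : QF :=
  ⟨cont (decHead L), cont L + cont (subLast (decHead L)), cont (subLast L)⟩

/-- Multiply all coefficients of a form by `u`. -/
def QF.smul (u : ℤ) (f : QF) : QF := ⟨u * f.a, u * f.b, u * f.c⟩

/-- The reversal `(A,B,C)^R = (C,B,A)`. -/
def QF.rev (f : QF) : QF := ⟨f.c, f.b, f.a⟩

/-- The map `ρ((A,B,C)) = (-A, B, -C)`. -/
def rho (f : QF) : QF := ⟨-f.a, f.b, -f.c⟩

/-- A form is primitive if its coefficients have gcd 1. -/
def IsPrimitiveForm (f : QF) : Prop := Int.gcd f.a (Int.gcd f.b f.c) = 1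

/-- `SL₂(ℤ)`-equivalence of forms. -/
def FormEquiv (f g : QF) : Prop :=
  ∃ α β γ δ : ℤ, α * δ - β * γ = 1 ∧ g = f.transform α β γ δ

/-- A nonempty string is primitive if it differs from all of its nontrivial cyclic
shifts. -/
def PrimitiveList {α : Type*} (l : List α) : Prop :=
  l ≠ [] ∧ ∀ n, 0 < n → n < l.length → l.rotate n ≠ l

/-- The continuant `[q₂, …, q_{l-1}]` of the interior of a list, with the convention
that it is `0` for a list of length `≤ 1`. -/
def innerCont (L : List ℤ) : ℤ := if L.length ≤ 1 then 0 else cont (L.tail.dropLast)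

/-- The section `ξ` of `γ`: `ξ((q₁,…,q_l)) = (A,B,C)` with `A = [q₂,…,q_l]`,
`B = [q₁,…,q_l] - [q₂,…,q_{l-1}]`, `C = -[q₁,…,q_{l-1}]`. -/
def xiForm (L : List ℤ) : QF := ⟨cont L.tail, cont L - innerCont L, -(cont L.dropLast)⟩

/-- `p` is the minimal period of the purely periodic sequence `d`. -/
def IsMinPeriod {α : Type*} [Inhabited α] (d : ℕ → α) (p : List α) : Prop :=
  p ≠ [] ∧ (∀ n, d n = p.getD (n % p.length) default) ∧
    ∀ m, 0 < m → (∀ n, d (n + m) = d n) → p.length ≤ m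

/-- `d` is the sequence of partial quotients of the Denjoy continued fraction of `x`
(`true` = quotient 1, `false` = quotient 0): `ξ₀ = x`, `qₙ = 0` if `ξ_{n-1} < 1`,
`qₙ = 1` if `ξ_{n-1} > 1`, and `ξₙ = 1/(ξ_{n-1} - qₙ)`. -/
def IsDenjoySeq (x : ℝ) (d : ℕ → Bool) : Prop :=
  ∃ ξ : ℕ → ℝ, ξ 0 = x ∧
    ∀ n, ((ξ n < 1 ∧ d n = false) ∨ (1 < ξ n ∧ d n = true)) ∧
      ξ (n + 1) = 1 / (ξ n - if d n then 1 else 0)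

/-- `a` is the sequence of partial quotients of the regular continued fraction of `x`. -/
def IsRegCFSeq (x : ℝ) (a : ℕ → ℤ) : Prop :=
  ∃ ξ : ℕ → ℝ, ξ 0 = x ∧ ∀ n, a n = ⌊ξ n⌋ ∧ ξ (n + 1) = 1 / (ξ n - (a n : ℝ))

/-- Regular-to-Denjoy conversion: each partial quotient `q` becomes the string
`1 0 1 0 ⋯ 0 1` of `q` ones alternating with `q - 1` zeroes. -/
def regToDen (L : List ℤ) : List Bool :=
  (L.map fun q => true :: (List.replicate (q - 1).toNat [false, true]).flatten).flatten

/-- Replace each character `0` by the two characters `01`. -/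
def expand01 (s : List Bool) : List Bool :=
  (s.map fun b => if b then [true] else [false, true]).flatten

/-- A quadratic irrational. -/
def IsQuadIrrational (x : ℝ) : Prop :=
  Irrational x ∧ ∃ a b c : ℤ, a ≠ 0 ∧ (a : ℝ) * x ^ 2 + (b : ℝ) * x + (c : ℝ) = 0


lemma disc_smul (u : ℤ) (f : QF) : (QF.smul u f).disc = u ^ 2 * f.disc := by
  simp only [QF.smul, QF.disc]; ring

lemma fund_u_eq {Δ t u t₀ u₀ : ℤ} (h : IsFundSol Δ t u) (h₀ : IsFundSol Δ t₀ u₀) : u₀ = u :=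
  le_antisymm (h₀.2.2.2 t u h.1 h.2.1 h.2.2.1) (h.2.2.2 t₀ u₀ h₀.1 h₀.2.1 h₀.2.2.1)

lemma fund_smul {Δ t u t₀ : ℤ} (h : IsFundSol Δ t u) (h₀t : 0 < t₀)
    (h₀ : |t₀ ^ 2 - Δ * u ^ 2| = 4) : IsFundSol (u ^ 2 * Δ) t₀ 1 := by
  refine ⟨h₀t, one_pos, ?_, fun t' u' _ hu' _ => hu'⟩
  rw [show t₀ ^ 2 - u ^ 2 * Δ * 1 ^ 2 = t₀ ^ 2 - Δ * u ^ 2 by ring]; exact h₀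

lemma fund_unsmul {Δ t u t' u' : ℤ} (h : IsFundSol Δ t u)
    (h' : IsFundSol (u ^ 2 * Δ) t' u') : u' = 1 ∧ IsFundSol Δ t' u := by
  have hu1 : u' = 1 := le_antisymm
    (h'.2.2.2 t 1 h.1 one_pos
      (by rw [show t ^ 2 - u ^ 2 * Δ * 1 ^ 2 = t ^ 2 - Δ * u ^ 2 by ring]; exact h.2.2.1))
    h'.2.1
  refine ⟨hu1, h'.1, h.2.1, ?_, h.2.2.2⟩
  have h2 := h'.2.2.1
  rw [hu1] at h2
  rw [show t' ^ 2 - Δ * u ^ 2 = t' ^ 2 - u ^ 2 * Δ * 1 ^ 2 by ring]; exact h2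

lemma beta_iff (f : QF) {t u : ℤ} (htu : IsFundSol f.disc t u) (L : List ℤ) :
    f.IsBeta L ↔ (QF.smul u f).IsBeta L := by
  constructor
  · rintro ⟨t₀, u₀, h₀, hcf, he, ho⟩
    have hu : u₀ = u := fund_u_eq htu h₀
    rw [hu] at h₀ hcf he ho
    refine ⟨t₀, 1, ?_, ?_, ?_, ?_⟩
    · rw [disc_smul]; exact fund_smul htu h₀.1 h₀.2.2.1
    · have hx : (((t₀ + (QF.smul u f).b * (1:ℤ) : ℤ) : ℚ) / 2) /
          ((((t₀ + (QF.smul u f).b * (1:ℤ) : ℤ) : ℚ) / 2) - (((QF.smul u f).a * (1:ℤ) : ℤ) : ℚ))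
          = (((t₀ + f.b * u : ℤ) : ℚ) / 2) /
          ((((t₀ + f.b * u : ℤ) : ℚ) / 2) - ((f.a * u : ℤ) : ℚ)) := by
        simp only [QF.smul]; push_cast; ring
      rw [hx]; exact hcf
    · intro hh
      apply he
      rw [disc_smul] at hh; rw [show f.disc * u ^ 2 = u ^ 2 * f.disc * 1 ^ 2 by ring]
      exact hh
    · intro hh
      apply ho
      rw [disc_smul] at hh; rw [show f.disc * u ^ 2 = u ^ 2 * f.disc * 1 ^ 2 by ring]
      exact hh
  · rintro ⟨t₀, u₀, h₀, hcf, he, ho⟩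
    rw [disc_smul] at h₀
    obtain ⟨hu1, hf₀⟩ := fund_unsmul htu h₀
    subst hu1
    refine ⟨t₀, u, hf₀, ?_, ?_, ?_⟩
    · have hx : (((t₀ + f.b * u : ℤ) : ℚ) / 2) /
          ((((t₀ + f.b * u : ℤ) : ℚ) / 2) - ((f.a * u : ℤ) : ℚ))
          = (((t₀ + (QF.smul u f).b * (1:ℤ) : ℤ) : ℚ) / 2) /
          ((((t₀ + (QF.smul u f).b * (1:ℤ) : ℤ) : ℚ) / 2) - (((QF.smul u f).a * (1:ℤ) : ℤ) : ℚ)) := by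
        simp only [QF.smul]; push_cast; ring
      rw [hx]; exact hcf
    · intro hh
      apply he
      rw [disc_smul]
      rw [show u ^ 2 * f.disc * 1 ^ 2 = f.disc * u ^ 2 by ring]
      exact hh
    · intro hh
      apply ho
      rw [disc_smul]
      rw [show u ^ 2 * f.disc * 1 ^ 2 = f.disc * u ^ 2 by ring]
      exact hh

lemma gamma_iff (f : QF) {t u : ℤ} (htu : IsFundSol f.disc t u) (L : List ℤ) :
    f.IsGamma L ↔ (QF.smul u f).IsGamma L := by
  constructor
  · rintro ⟨t₀, u₀, h₀, hcf, he, ho⟩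
    have hu : u₀ = u := fund_u_eq htu h₀
    rw [hu] at h₀ hcf he ho
    refine ⟨t₀, 1, ?_, ?_, ?_, ?_⟩
    · rw [disc_smul]; exact fund_smul htu h₀.1 h₀.2.2.1
    · have hx : (((t₀ + (QF.smul u f).b * (1:ℤ) : ℤ) : ℚ) / 2) / (((QF.smul u f).a * (1:ℤ) : ℤ) : ℚ)
          = (((t₀ + f.b * u : ℤ) : ℚ) / 2) / ((f.a * u : ℤ) : ℚ) := by
        simp only [QF.smul]; push_cast; ring
      rw [hx]; exact hcf
    · intro hh
      apply he
      rw [disc_smul] at hh; rw [show f.disc * u ^ 2 = u ^ 2 * f.disc * 1 ^ 2 by ring]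
      exact hh
    · intro hh
      apply ho
      rw [disc_smul] at hh; rw [show f.disc * u ^ 2 = u ^ 2 * f.disc * 1 ^ 2 by ring]
      exact hh
  · rintro ⟨t₀, u₀, h₀, hcf, he, ho⟩
    rw [disc_smul] at h₀
    obtain ⟨hu1, hf₀⟩ := fund_unsmul htu h₀
    subst hu1
    refine ⟨t₀, u, hf₀, ?_, ?_, ?_⟩
    · have hx : (((t₀ + f.b * u : ℤ) : ℚ) / 2) / ((f.a * u : ℤ) : ℚ)
          = (((t₀ + (QF.smul u f).b * (1:ℤ) : ℤ) : ℚ) / 2) / (((QF.smul u f).a * (1:ℤ) : ℤ) : ℚ) := by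
        simp only [QF.smul]; push_cast; ring
      rw [hx]; exact hcf
    · intro hh
      apply he
      rw [disc_smul]
      rw [show u ^ 2 * f.disc * 1 ^ 2 = f.disc * u ^ 2 by ring]
      exact hh
    · intro hh
      apply ho
      rw [disc_smul]
      rw [show u ^ 2 * f.disc * 1 ^ 2 = f.disc * u ^ 2 by ring]
      exact hh

/-- **Lemma.** With `(t,u)` the fundamental solution of `|t² - Δu²| = 4` for the
discriminant `Δ` of `f`: if `f` is Z-reduced then `β(f) = β(uf)` and
`σ(f) = σ(uf)`; if `f ∈ G⁺` then `γ(f) = γ(uf)`. -/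
theorem stmt2 (f : QF) (hf : f.IsIndefinite) (t u : ℤ)
    (htu : IsFundSol f.disc t u) :
    (f.IsZReduced →
      (∀ L : List ℤ, f.IsBeta L ↔ (QF.smul u f).IsBeta L) ∧
      (∀ s : List Bool, f.IsSigma s ↔ (QF.smul u f).IsSigma s)) ∧
    (f.IsGPlus → ∀ L : List ℤ, f.IsGamma L ↔ (QF.smul u f).IsGamma L) := by
  refine ⟨fun _ => ⟨fun L => beta_iff f htu L, fun s => ?_⟩, fun _ L => gamma_iff f htu L⟩
  constructor
  · rintro ⟨L, hL, rfl⟩; exact ⟨L, (beta_iff f htu L).mp hL, rfl⟩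
  · rintro ⟨L, hL, rfl⟩; exact ⟨L, (beta_iff f htu L).mpr hL, rfl⟩
end

section
/- Let S₂ be the set of finite sequences of positive integers of length at least 2, and let Z̃ be the set of Z-reduced forms whose discriminant has the form k²+4 or k²−4 for some integer k. Then the map τ: S₂ → Z̃ is a bijection whose inverse is the restriction of β to Z̃. Moreover, the discriminant of τ((q₁,…,q_l)) equals ([q₁,…,q_l] − [q₁−1,q₂,…,q_{l−1},q_l−1])² + (−1)^l·4. -/
/-!
The continuants of `L = (q₁, …, q_l)` are the entries of the matrix
`∏ [[qᵢ, 1], [1, 0]] = [[X, X'], [T, I]]`, where `X = [L]`, `T = [q₂, …, q_l]`,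
`X' = [q₁, …, q_{l-1}]` and `I = [q₂, …, q_{l-1}]`; decreasing the first or the last entry of `L`
multiplies this product by an elementary matrix, so `τ(L) = (X - T, 2X - T - X' + I, X - X')`.
Its determinant `XI - X'T = (-1)^l` gives `Δ(τ(L)) = (T + X' - I)² + 4(-1)^l`, and transposing
(which reverses `L`) turns `T < X` into `X' < X`, whence `τ(L)` is Z-reduced.

Since `Δ = k² ± 4`, the fundamental solution has `u = 1`. For `τ(L)` it is `t = T + X' - I`, with
`z = X` and `z - A = T`, so `β(τ(L)) = L`. Conversely, if `β(f) = L`, the continued fraction gives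
`X (z - A) = z T`; as `z² - Bz + AC = ±1` and `XI - X'T = ±1`, both `gcd(z, A)` and `gcd(X, T)`
are `1`, so `z = X` and `A = X - T`. Then `(B, C) = (B_τ + jA, C_τ + jX)` for some `j`, and the
inequalities `C > 0`, `B > A + C` force `j = 0`.
-/

def contMat (L : List ℤ) : Matrix (Fin 2) (Fin 2) ℤ :=
  (L.map fun q => !![q, 1; 1, 0]).prod

@[simp]
theorem contMat_nil : contMat [] = 1 := rfl

@[simp]
theorem contMat_cons (q : ℤ) (L : List ℤ) :
    contMat (q :: L) = !![q, 1; 1, 0] * contMat L := rfl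

theorem innerCont_of_two_le {L : List ℤ} (hL : 2 ≤ L.length) :
    innerCont L = cont L.tail.dropLast :=
  if_neg (by omega)

theorem cont_cons_dropLast (q : ℤ) {L : List ℤ} (hL : L ≠ []) :
    cont (q :: L).dropLast = q * cont L.dropLast + innerCont L := by
  match L, hL with
  | [r], _ => simp [innerCont, cont]
  | r :: x :: s, _ =>
    rw [innerCont_of_two_le (by simp), List.dropLast_cons_cons, List.dropLast_cons_cons]
    rfl

theorem contMat_eq : ∀ {L : List ℤ}, L ≠ [] →
    contMat L = !![cont L, cont L.dropLast; cont L.tail, innerCont L]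
  | [q], _ => by ext i j; fin_cases i <;> fin_cases j <;> simp [innerCont, cont]
  | q :: r :: s, _ => by
    rw [contMat_cons, contMat_eq (List.cons_ne_nil r s),
      cont_cons_dropLast q (List.cons_ne_nil r s), innerCont_of_two_le (L := q :: r :: s) (by simp)]
    ext i j; fin_cases i <;> fin_cases j <;> simp [cont]

theorem det_contMat (L : List ℤ) : (contMat L).det = (-1) ^ L.length := by
  induction L with
  | nil => simp
  | cons q L ih =>
    rw [contMat_cons, Matrix.det_mul, ih, Matrix.det_fin_two_of, List.length_cons, pow_succ]
    ring

theorem contMat_reverse (L : List ℤ) : contMat L.reverse = (contMat L).transpose := by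
  have hsymm (q : ℤ) : (!![q, 1; 1, 0]).transpose = !![q, 1; 1, 0] := by
    ext i j; fin_cases i <;> fin_cases j <;> rfl
  simp only [contMat, Matrix.transpose_list_prod, List.map_reverse, List.map_map,
    Function.comp_def, hsymm]

theorem decHead_ne_nil {L : List ℤ} (hL : L ≠ []) : decHead L ≠ [] := by
  cases L with
  | nil => exact hL
  | cons q L => exact List.cons_ne_nil _ _

theorem subLast_ne_nil : ∀ {L : List ℤ}, L ≠ [] → subLast L ≠ []
  | [_], _ | _ :: _ :: _, _ => List.cons_ne_nil _ _

theorem contMat_decHead {L : List ℤ} (hL : L ≠ []) :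
    contMat (decHead L) = !![1, -1; 0, 1] * contMat L := by
  cases L with
  | nil => exact absurd rfl hL
  | cons q L =>
    rw [contMat_cons, ← mul_assoc, Matrix.mul_fin_two]
    simp only [decHead, contMat_cons]
    congr 1
    ext i j; fin_cases i <;> fin_cases j <;> simp [sub_eq_add_neg]

theorem contMat_subLast : ∀ {L : List ℤ}, L ≠ [] →
    contMat (subLast L) = contMat L * !![1, 0; -1, 1]
  | [q], _ => by
    simp only [subLast, contMat_cons, contMat_nil, mul_one, Matrix.mul_fin_two]
    ext i j; fin_cases i <;> fin_cases j <;> simp [sub_eq_add_neg]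
  | q :: r :: s, _ => by
    change !![q, 1; 1, 0] * contMat (subLast (r :: s)) = _
    rw [contMat_subLast (List.cons_ne_nil r s), ← mul_assoc]
    rfl

theorem cont_eq_contMat {L : List ℤ} (hL : L ≠ []) : cont L = contMat L 0 0 := by
  simp [contMat_eq hL]

theorem cont_mul_innerCont_sub {L : List ℤ} (hL : L ≠ []) :
    cont L * innerCont L - cont L.dropLast * cont L.tail = (-1) ^ L.length := by
  rw [← det_contMat, contMat_eq hL, Matrix.det_fin_two_of]

theorem cont_reverse {L : List ℤ} (hL : L ≠ []) : cont L.reverse = cont L := by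
  rw [cont_eq_contMat (List.reverse_ne_nil_iff.mpr hL), contMat_reverse, cont_eq_contMat hL]
  rfl

theorem cont_dropLast_eq_cont_reverse_tail {L : List ℤ} (hL : L ≠ []) :
    cont L.dropLast = cont L.reverse.tail := by
  have := congrFun₂ (contMat_reverse L) 1 0
  rw [contMat_eq (List.reverse_ne_nil_iff.mpr hL), contMat_eq hL] at this
  simpa using this.symm

theorem cont_decHead {L : List ℤ} (hL : L ≠ []) :
    cont (decHead L) = cont L - cont L.tail := by
  rw [cont_eq_contMat (decHead_ne_nil hL), contMat_decHead hL, contMat_eq hL]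
  simp [Matrix.mul_apply, sub_eq_add_neg]

theorem cont_subLast {L : List ℤ} (hL : L ≠ []) :
    cont (subLast L) = cont L - cont L.dropLast := by
  rw [cont_eq_contMat (subLast_ne_nil hL), contMat_subLast hL, contMat_eq hL]
  simp [Matrix.mul_apply, sub_eq_add_neg]

theorem cont_subLast_decHead {L : List ℤ} (hL : L ≠ []) :
    cont (subLast (decHead L)) = cont L - cont L.tail - cont L.dropLast + innerCont L := by
  rw [cont_eq_contMat (subLast_ne_nil (decHead_ne_nil hL)), contMat_subLast (decHead_ne_nil hL),
    contMat_decHead hL, contMat_eq hL, Matrix.mul_fin_two, Matrix.mul_fin_two]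
  simp only [Matrix.of_apply, Matrix.cons_val', Matrix.cons_val_zero, Matrix.empty_val',
    Matrix.cons_val_fin_one]
  ring

theorem cont_pos : ∀ {L : List ℤ}, (∀ q ∈ L, 0 < q) → 0 < cont L
  | [], _ => one_pos
  | [q], hpos => hpos q (List.mem_singleton_self q)
  | q :: r :: s, hpos => by
    have hq := hpos q (by simp)
    have h₁ := cont_pos (L := r :: s) fun x hx => hpos x (by simp_all)
    have h₂ := cont_pos (L := s) fun x hx => hpos x (by simp_all)
    exact add_pos (mul_pos hq h₁) h₂

theorem cont_tail_lt : ∀ {L : List ℤ}, 2 ≤ L.length → (∀ q ∈ L, 0 < q) → cont L.tail < cont L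
  | [], h2, _ | [_], h2, _ => by simp at h2
  | q :: r :: s, _, hpos => by
    have hq := hpos q (by simp)
    have h₁ := cont_pos (L := r :: s) fun x hx => hpos x (by simp_all)
    have h₂ := cont_pos (L := s) fun x hx => hpos x (by simp_all)
    change cont (r :: s) < q * cont (r :: s) + cont s
    nlinarith

theorem cont_dropLast_lt {L : List ℤ} (h2 : 2 ≤ L.length) (hpos : ∀ q ∈ L, 0 < q) :
    cont L.dropLast < cont L := by
  have hL : L ≠ [] := List.ne_nil_of_length_pos (by omega)
  rw [cont_dropLast_eq_cont_reverse_tail hL, ← cont_reverse hL]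
  exact cont_tail_lt (by simpa using h2) (by simpa using hpos)

theorem cont_dropLast_le : ∀ {L : List ℤ}, (∀ q ∈ L, 0 < q) → cont L.dropLast ≤ cont L
  | [], _ => le_rfl
  | [q], hpos => hpos q (List.mem_singleton_self q)
  | q :: r :: s, hpos => (cont_dropLast_lt (by simp) hpos).le

theorem innerCont_pos {L : List ℤ} (h2 : 2 ≤ L.length) (hpos : ∀ q ∈ L, 0 < q) :
    0 < innerCont L := by
  rw [innerCont_of_two_le h2]
  exact cont_pos fun q hq => hpos q (List.mem_of_mem_tail (List.dropLast_subset _ hq))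

theorem innerCont_le_cont_tail {L : List ℤ} (hpos : ∀ q ∈ L, 0 < q) :
    innerCont L ≤ cont L.tail := by
  unfold innerCont
  split_ifs
  · exact (cont_pos fun q hq => hpos q (List.mem_of_mem_tail hq)).le
  · exact cont_dropLast_le fun q hq => hpos q (List.mem_of_mem_tail hq)

theorem innerCont_lt_cont_tail {L : List ℤ} (h3 : 3 ≤ L.length) (hpos : ∀ q ∈ L, 0 < q) :
    innerCont L < cont L.tail := by
  rw [innerCont_of_two_le (by omega)]
  exact cont_dropLast_lt (by simp; omega) fun q hq => hpos q (List.mem_of_mem_tail hq)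

theorem innerCont_lt_cont_dropLast {L : List ℤ} (h3 : 3 ≤ L.length) (hpos : ∀ q ∈ L, 0 < q) :
    innerCont L < cont L.dropLast := by
  rw [innerCont_of_two_le (by omega), ← List.tail_dropLast]
  exact cont_tail_lt (by simp; omega) fun q hq => hpos q (List.dropLast_subset _ hq)

theorem tau_eq_mk {L : List ℤ} (hL : L ≠ []) :
    tau L = ⟨cont L - cont L.tail, 2 * cont L - cont L.tail - cont L.dropLast + innerCont L,
      cont L - cont L.dropLast⟩ := by
  rw [tau, cont_decHead hL, cont_subLast hL, cont_subLast_decHead hL]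
  congr 1
  ring

theorem cont_sub_cont_subLast_decHead {L : List ℤ} (hL : L ≠ []) :
    cont L - cont (subLast (decHead L)) = cont L.tail + cont L.dropLast - innerCont L := by
  rw [cont_subLast_decHead hL]
  ring

theorem tau_disc {L : List ℤ} (hL : L ≠ []) :
    (tau L).disc = (cont L - cont (subLast (decHead L))) ^ 2 + (-1) ^ L.length * 4 := by
  rw [QF.disc, tau_eq_mk hL, cont_sub_cont_subLast_decHead hL, ← cont_mul_innerCont_sub hL]
  ring

theorem not_isSquare_sq_add_four {k : ℤ} (hk : 0 < k) : ¬ IsSquare (k ^ 2 + 4) := by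
  rintro ⟨r, hr⟩
  rw [← abs_mul_abs_self r] at hr
  have h₁ : k < |r| := by nlinarith [abs_nonneg r]
  have h₂ : |r| < k + 2 := by nlinarith [abs_nonneg r]
  have hr' : |r| = k + 1 := by omega
  rw [hr'] at hr
  have : 2 * k = 3 := by linarith
  omega

theorem not_isSquare_sq_sub_four {k : ℤ} (hk : 2 < k) : ¬ IsSquare (k ^ 2 - 4) := by
  rintro ⟨r, hr⟩
  rw [← abs_mul_abs_self r] at hr
  have h₁ : k - 2 < |r| := by nlinarith [abs_nonneg r]
  have h₂ : |r| < k := by nlinarith [abs_nonneg r]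
  have hr' : |r| = k - 1 := by omega
  rw [hr'] at hr
  have : 2 * k = 5 := by linarith
  omega

theorem tau_isIndefinite {L : List ℤ} (h2 : 2 ≤ L.length) (hpos : ∀ q ∈ L, 0 < q) :
    (tau L).IsIndefinite := by
  have hL : L ≠ [] := List.ne_nil_of_length_pos (by omega)
  have hIT := innerCont_le_cont_tail hpos
  have hDr := cont_pos fun q hq => hpos q (List.dropLast_subset _ hq)
  rw [QF.IsIndefinite, tau_disc hL, cont_sub_cont_subLast_decHead hL]
  rcases Nat.even_or_odd L.length with he | ho
  · rw [he.neg_one_pow, one_mul]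
    exact ⟨by positivity, not_isSquare_sq_add_four (by linarith)⟩
  · have h3 : 3 ≤ L.length := by obtain ⟨m, hm⟩ := ho; omega
    have hk : 2 < cont L.tail + cont L.dropLast - innerCont L := by
      linarith [innerCont_lt_cont_tail h3 hpos, innerCont_lt_cont_dropLast h3 hpos,
        innerCont_pos h2 hpos]
    rw [ho.neg_one_pow, neg_one_mul, ← sub_eq_add_neg]
    exact ⟨by nlinarith, not_isSquare_sq_sub_four hk⟩

theorem tau_isZReduced {L : List ℤ} (h2 : 2 ≤ L.length) (hpos : ∀ q ∈ L, 0 < q) :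
    (tau L).IsZReduced := by
  have hT := cont_tail_lt h2 hpos
  have hDr := cont_dropLast_lt h2 hpos
  have hI := innerCont_pos h2 hpos
  refine ⟨tau_isIndefinite h2 hpos, ?_⟩
  rw [tau_eq_mk (List.ne_nil_of_length_pos (by omega))]
  refine ⟨?_, ?_, ?_, ?_⟩ <;> dsimp only <;> linarith

theorem isFundSol_of_snd_eq_one {Δ t : ℤ} (ht : 0 < t) (h : |t ^ 2 - Δ| = 4) :
    IsFundSol Δ t 1 :=
  ⟨ht, one_pos, by simpa using h, fun _ _ _ hu' _ => hu'⟩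

theorem tau_isBeta {L : List ℤ} (h2 : 2 ≤ L.length) (hpos : ∀ q ∈ L, 0 < q) :
    (tau L).IsBeta L := by
  have hL : L ≠ [] := List.ne_nil_of_length_pos (by omega)
  set k := cont L - cont (subLast (decHead L)) with hk
  have hk0 : 0 < k := by
    rw [hk, cont_sub_cont_subLast_decHead hL]
    linarith [innerCont_le_cont_tail hpos, cont_pos fun q hq => hpos q (List.dropLast_subset _ hq)]
  have hdisc : k ^ 2 - (tau L).disc = -(-1) ^ L.length * 4 := by
    rw [tau_disc hL]
    ring
  have hne : (-1 : ℤ) ≠ 1 := by decide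
  refine ⟨k, 1, isFundSol_of_snd_eq_one hk0 ?_, ⟨hL, hpos, ?_⟩, fun h => ?_, fun h => ?_⟩
  · rcases neg_one_pow_eq_or ℤ L.length with h | h <;> simp [hdisc, h]
  · have hz : (((k + (tau L).b * 1 : ℤ) : ℚ) / 2) = cont L := by
      simp only [hk, tau]
      push_cast
      ring
    have hA : (((tau L).a * 1 : ℤ) : ℚ) = cont L - cont L.tail := by
      simp [tau, cont_decHead hL]
    have hT : (cont L.tail : ℚ) ≠ 0 := by
      exact_mod_cast (cont_pos fun q hq => hpos q (List.mem_of_mem_tail hq)).ne'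
    rw [hz, hA, sub_sub_cancel, div_mul_cancel₀ _ hT]
  · rw [one_pow, mul_one, hdisc] at h
    exact (neg_one_pow_eq_one_iff_even hne).mp (by linarith)
  · rw [one_pow, mul_one, hdisc] at h
    exact (neg_one_pow_eq_neg_one_iff_odd hne).mp (by linarith)

theorem isCoprime_cont_cont_tail {L : List ℤ} (hL : L ≠ []) : IsCoprime (cont L) (cont L.tail) := by
  have h := cont_mul_innerCont_sub hL
  rcases neg_one_pow_eq_or ℤ L.length with hs | hs <;> rw [hs] at h
  · exact ⟨innerCont L, -cont L.dropLast, by linear_combination h⟩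
  · exact ⟨-innerCont L, cont L.dropLast, by linear_combination -h⟩

theorem eq_tau_of_a_eq {f : QF} {L : List ℤ} (hL : L ≠ []) (hpos : ∀ q ∈ L, 0 < q)
    (hc : 0 < f.c) (hb : f.a + f.c < f.b) (ha : f.a = (tau L).a)
    (heval : f.a * f.c - f.b * cont L = (tau L).a * (tau L).c - (tau L).b * cont L) :
    f = tau L := by
  have hX := cont_pos hpos
  have hT := cont_pos fun q hq => hpos q (List.mem_of_mem_tail hq)
  have hDr := cont_pos fun q hq => hpos q (List.dropLast_subset _ hq)
  have hIT := innerCont_le_cont_tail hpos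
  rw [tau_eq_mk hL] at ha heval ⊢
  dsimp only at ha heval
  have hcop : IsCoprime (cont L) f.a := by
    obtain ⟨u, v, huv⟩ := isCoprime_cont_cont_tail hL
    exact ⟨u + v, -v, by rw [ha]; linear_combination huv⟩
  obtain ⟨j, hj⟩ : cont L ∣ f.c - (cont L - cont L.dropLast) :=
    hcop.dvd_of_dvd_mul_left ⟨f.b - (2 * cont L - cont L.tail - cont L.dropLast + innerCont L),
      by linear_combination heval - (cont L - cont L.dropLast) * ha⟩
  have hjb : f.b - (2 * cont L - cont L.tail - cont L.dropLast + innerCont L) = f.a * j := by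
    refine mul_left_cancel₀ hX.ne' ?_
    linear_combination -heval + (cont L - cont L.dropLast) * ha + f.a * hj
  have hexcess : f.b - f.a - f.c = innerCont L - j * cont L.tail := by
    linear_combination hjb - hj - (1 - j) * ha
  have hj0 : j = 0 := by
    rcases lt_trichotomy j 0 with hneg | hzero | hposj
    · nlinarith
    · exact hzero
    · nlinarith
  obtain ⟨a, b, c⟩ := f
  dsimp only at ha hj hjb ⊢
  rw [hj0] at hj hjb
  congr 1 <;> linarith

theorem IsFundSol.snd_eq_one {Δ t u k : ℤ} (h : IsFundSol Δ t u) (hk : k ≠ 0)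
    (hΔ : Δ = k ^ 2 + 4 ∨ Δ = k ^ 2 - 4) : u = 1 := by
  have hsol : |(|k|) ^ 2 - Δ * 1 ^ 2| = 4 := by
    rcases hΔ with rfl | rfl <;> norm_num [sq_abs]
  have := h.2.2.2 |k| 1 (abs_pos.mpr hk) one_pos hsol
  linarith [h.2.1]

theorem QF.exists_half_of_sq_sub_disc {f : QF} {t e : ℤ} (h : t ^ 2 - f.disc = 4 * e) :
    ∃ z, t + f.b = 2 * z ∧ z ^ 2 - f.b * z + f.a * f.c = e := by
  have hpar : Even (t + f.b) := by
    have : Even (t ^ 2 - f.b ^ 2) := ⟨2 * (e - f.a * f.c), by rw [QF.disc] at h; linarith⟩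
    rw [Int.even_sub, Int.even_pow' two_ne_zero, Int.even_pow' two_ne_zero] at this
    exact Int.even_add.mpr this
  obtain ⟨z, hz⟩ := hpar
  refine ⟨z, by omega, ?_⟩
  have h4 : 4 * (z ^ 2 - f.b * z + f.a * f.c) = 4 * e := by
    rw [QF.disc, show t = 2 * z - f.b by omega] at h
    linear_combination h
  omega

theorem mul_sub_eq_of_eq_div_mul {x y z a : ℚ} (hx : x ≠ 0) (h : x = z / (z - a) * y) :
    x * (z - a) = z * y := by
  have hza : z - a ≠ 0 := by
    rintro h0
    rw [h0, div_zero, zero_mul] at h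
    exact hx h
  rw [h]
  field_simp

theorem eq_cont_of_cont_mul_sub_eq {L : List ℤ} (hL : L ≠ []) (hpos : ∀ q ∈ L, 0 < q)
    {z a : ℤ} (hz : 0 < z) (hza : IsCoprime z a) (h : cont L * (z - a) = z * cont L.tail) :
    z = cont L := by
  have h₁ : z ∣ cont L := hza.dvd_of_dvd_mul_right ⟨cont L - cont L.tail, by linarith⟩
  have h₂ : cont L ∣ z := (isCoprime_cont_cont_tail hL).dvd_of_dvd_mul_right ⟨z - a, by linarith⟩
  exact Int.dvd_antisymm hz.le (cont_pos hpos).le h₁ h₂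

theorem tau_eq_of_isBeta {f : QF} (hf : f.IsZReduced)
    (hΔ : ∃ k : ℤ, f.disc = k ^ 2 + 4 ∨ f.disc = k ^ 2 - 4) {L : List ℤ} (hβ : f.IsBeta L) :
    tau L = f := by
  obtain ⟨⟨hΔpos, hΔsq⟩, -, hB, hc, hb⟩ := hf
  obtain ⟨t, u, hfund, ⟨hL, hpos, hcf⟩, heven, hodd⟩ := hβ
  obtain ⟨k, hk⟩ := hΔ
  have hk0 : k ≠ 0 := by
    rintro rfl
    rcases hk with h | h
    · exact hΔsq ⟨2, by rw [h]; norm_num⟩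
    · rw [h] at hΔpos; norm_num at hΔpos
  obtain rfl := hfund.snd_eq_one hk0 hk
  have hsign : t ^ 2 - f.disc = 4 * -(-1) ^ L.length := by
    rcases (abs_eq (by norm_num : (0 : ℤ) ≤ 4)).mp (by simpa using hfund.2.2.1) with h | h
    · rw [(hodd (by simpa using h)).neg_one_pow]; linarith
    · rw [(heven (by simpa using h)).neg_one_pow]; linarith
  obtain ⟨z, htz, hz⟩ := f.exists_half_of_sq_sub_disc hsign
  have hX := cont_pos hpos
  have hz0 : 0 < z := by linarith [hfund.1]
  have hcf' : cont L * (z - f.a) = z * cont L.tail := by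
    rw [mul_one, mul_one, htz] at hcf
    push_cast at hcf
    rw [mul_div_cancel_left₀ _ two_ne_zero] at hcf
    exact_mod_cast mul_sub_eq_of_eq_div_mul (by exact_mod_cast hX.ne') hcf
  have hzX : z = cont L := by
    refine eq_cont_of_cont_mul_sub_eq hL hpos hz0 ?_ hcf'
    set e : ℤ := -(-1) ^ L.length
    have he : e * e = 1 := by rw [neg_mul_neg, ← mul_pow]; norm_num
    exact ⟨e * (z - f.b), e * f.c, by linear_combination e * hz + he⟩
  subst hzX
  have ha : f.a = (tau L).a := by
    rw [tau_eq_mk hL]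
    linarith [mul_left_cancel₀ hX.ne' hcf']
  symm
  refine eq_tau_of_a_eq hL hpos hc hb ha ?_
  rw [tau_eq_mk hL]
  linear_combination hz + cont_mul_innerCont_sub hL

/-- **Theorem (form from beads).** `τ : S₂ → Z̃` is a bijection with inverse the
restriction of `β`, and the discriminant of `τ((q₁,…,q_l))` is
`([q₁,…,q_l] - [q₁-1,q₂,…,q_{l-1},q_l-1])² + (-1)^l · 4`. -/
theorem stmt4 :
    (∀ L : List ℤ, 2 ≤ L.length → (∀ q ∈ L, 0 < q) →
      (tau L).IsZReduced ∧
      (tau L).disc =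
        (cont L - cont (subLast (decHead L))) ^ 2 + (-1 : ℤ) ^ L.length * 4 ∧
      (∃ k : ℤ, (tau L).disc = k ^ 2 + 4 ∨ (tau L).disc = k ^ 2 - 4) ∧
      (tau L).IsBeta L) ∧
    (∀ f : QF, f.IsZReduced →
      (∃ k : ℤ, f.disc = k ^ 2 + 4 ∨ f.disc = k ^ 2 - 4) →
      ∀ L : List ℤ, f.IsBeta L → tau L = f) := by
  refine ⟨fun L h2 hpos => ?_, fun f hf hΔ L hβ => tau_eq_of_isBeta hf hΔ hβ⟩
  have hdisc := tau_disc (List.ne_nil_of_length_pos (by omega : 0 < L.length))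
  refine ⟨tau_isZReduced h2 hpos, hdisc, ⟨cont L - cont (subLast (decHead L)), ?_⟩,
    tau_isBeta h2 hpos⟩
  rcases neg_one_pow_eq_or ℤ L.length with h | h <;> rw [hdisc, h]
  · exact Or.inl (by ring)
  · exact Or.inr (by ring)
end

section
/- Define ξ((q₁,…,q_l)) = (A,B,C) with A = [q₂,…,q_l], B = [q₁,q₂,…,q_l] − [q₂,…,q_{l−1}], and C = −[q₁,…,q_{l−1}]. Then ξ is a section of γ: for every nonempty sequence (q₁,…,q_l) of positive integers, ξ((q₁,…,q_l)) lies in G⁺ and γ(ξ((q₁,…,q_l))) = (q₁,…,q_l). The image of ξ is exactly the set of forms in G⁺ whose discriminant has the form k²+4 or k²−4 for some integer k, and the discriminant of ξ((q₁,…,q_l)) equals ([q₁,…,q_l] + [q₂,…,q_{l−1}])² + (−1)^{l+1}·4. In particular, γ: G⁺ → S₁ is surjective. -/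
/-! The four continuants `p = [q₁,…,q_l]`, `A = [q₂,…,q_l]`, `C = [q₁,…,q_{l-1}]` and
`m = [q₂,…,q_{l-1}]` are the entries of `∏ᵢ [[qᵢ, 1], [1, 0]] = [[p, C], [A, m]]`, so
`p m - A C = (-1)^l`. Hence `ξ(L) = (A, p - m, -C)` has discriminant
`(p - m)² + 4AC = (p + m)² - 4(-1)^l`, its fundamental solution is `(p + m, 1)`, and
`z/(Au) = p/A = [L]/[L.tail]`; the G-reducedness of `ξ(L)` comes from the inequalities
`1 ≤ A, C ≤ p` and `0 ≤ m ≤ A, C` satisfied by the continuants of a positive sequence.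

Conversely, if `(A, B, -C)` lies in `G⁺` and has discriminant `B² + 4AC = k² ∓ 4`, then
`m = (|k| - B)/2` solves `(B + m) m - A C = ±1`, the quadruple `(B + m, A, C, m)`
satisfies the same inequalities, and the Euclidean algorithm on `p/A` peels off a
sequence `L` whose continuants are exactly this quadruple. -/

lemma cont_cons_of_ne_nil (q : ℤ) {M : List ℤ} (hM : M ≠ []) :
    cont (q :: M) = q * cont M + cont M.tail := by
  match M, hM with
  | [_], _ => simp [cont]
  | _ :: _ :: _, _ => rfl

lemma innerCont_cons_of_ne_nil (q : ℤ) {M : List ℤ} (hM : M ≠ []) :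
    innerCont (q :: M) = cont M.dropLast := by
  match M, hM with
  | _ :: _, _ => simp [innerCont]

lemma cont_dropLast_cons_of_ne_nil (q : ℤ) {M : List ℤ} (hM : M ≠ []) :
    cont (q :: M).dropLast = q * cont M.dropLast + innerCont M := by
  match M, hM with
  | [_], _ => simp [cont, innerCont]
  | [_, _], _ => simp [cont, innerCont]
  | _ :: _ :: _ :: _, _ => simp [cont, innerCont]

theorem cont_determinant (L : List ℤ) (hL : L ≠ []) :
    cont L * innerCont L - cont L.tail * cont L.dropLast = (-1) ^ L.length := by
  induction L with
  | nil => exact absurd rfl hL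
  | cons q M ih =>
    rcases eq_or_ne M [] with rfl | hM
    · simp [cont, innerCont]
    · rw [cont_cons_of_ne_nil q hM, innerCont_cons_of_ne_nil q hM, List.tail_cons,
        cont_dropLast_cons_of_ne_nil q hM, List.length_cons, pow_succ]
      linear_combination -ih hM

/-- The inequalities satisfied by the continuants `(p, A, C, m)` of a sequence of positive
integers. -/
structure ContinuantBounds (p A C m : ℤ) : Prop where
  one_le_tail : 1 ≤ A
  tail_le : A ≤ p
  one_le_dropLast : 1 ≤ C
  dropLast_le : C ≤ p
  inner_nonneg : 0 ≤ m
  inner_le_tail : m ≤ A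
  inner_le_dropLast : m ≤ C

theorem continuantBounds_cont (L : List ℤ) (hL : L ≠ []) (hpos : ∀ q ∈ L, 0 < q) :
    ContinuantBounds (cont L) (cont L.tail) (cont L.dropLast) (innerCont L) := by
  induction L with
  | nil => exact absurd rfl hL
  | cons q M ih =>
    have hq : 0 < q := hpos q List.mem_cons_self
    rcases eq_or_ne M [] with rfl | hM
    · constructor <;> simp [cont, innerCont] <;> omega
    · obtain ⟨hA1, hAp, hC1, hCp, hm0, hmA, hmC⟩ :=
        ih hM fun x hx => hpos x (List.mem_cons_of_mem _ hx)
      rw [cont_cons_of_ne_nil q hM, innerCont_cons_of_ne_nil q hM, List.tail_cons,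
        cont_dropLast_cons_of_ne_nil q hM]
      constructor <;> nlinarith

namespace ContinuantBounds

variable {p A C m : ℤ}

theorem abs_sub_lt (hb : ContinuantBounds p A C m)
    (hdet : p * m - A * C = 1 ∨ p * m - A * C = -1) : |A - C| < p - m := by
  obtain ⟨hA1, hAp, hC1, hCp, hm0, hmA, hmC⟩ := hb
  rw [abs_lt]
  constructor
  · by_contra h
    have hdet0 : p * m - A * C = 0 := by rw [show C = p by omega, show m = A by omega]; ring
    omega
  · by_contra h
    have hdet0 : p * m - A * C = 0 := by rw [show A = p by omega, show m = C by omega]; ring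
    omega

theorem tail_lt (hb : ContinuantBounds p A C m)
    (hdet : p * m - A * C = 1 ∨ p * m - A * C = -1) (hm : 0 < m) : A < p := by
  obtain ⟨hA1, hAp, hC1, hCp, hm0, hmA, hmC⟩ := hb
  by_contra h
  obtain rfl : A = p := by omega
  rcases hdet with hdet | hdet
  · nlinarith
  · obtain rfl : A = 1 :=
      Int.eq_one_of_mul_eq_one_right (by omega) (by linarith : A * (C - m) = 1)
    omega

theorem two_le_tail (hb : ContinuantBounds p A C m) (hdet : p * m - A * C = -1)
    (hm : 0 < m) : 2 ≤ A := by
  by_contra h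
  obtain rfl : A = 1 := by have := hb.one_le_tail; omega
  obtain rfl : m = 1 := by have := hb.inner_le_tail; omega
  have := hb.dropLast_le
  omega

/-- One step of the Euclidean algorithm on `p / A`, with first partial quotient `q`:
`[[p, C], [A, m]] = [[q, 1], [1, 0]] * [[A, m], [r + 1, C - q m]]`. -/
theorem euclid_step (hb : ContinuantBounds p A C m)
    (hdet : p * m - A * C = 1 ∨ p * m - A * C = -1) (hm : 0 < m) {q r : ℤ}
    (hqr : A * q + r = p - 1) (hr : 0 ≤ r) (hrA : r < A) :
    ContinuantBounds A (r + 1) m (C - q * m) := by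
  have htwo := fun h => hb.two_le_tail h hm
  obtain ⟨hA1, hAp, hC1, hCp, hm0, hmA, hmC⟩ := hb
  have key : A * (C - q * m) = (r + 1) * m - (p * m - A * C) := by
    linear_combination (-m) * hqr
  refine ⟨by omega, by omega, by omega, hmA, ?_, ?_, ?_⟩
  · rcases hdet with hdet | hdet <;> rw [hdet] at key <;> nlinarith
  · rcases hdet with hdet | hdet
    · rw [hdet] at key; nlinarith
    · have := htwo hdet
      rw [hdet] at key; nlinarith
  · rcases hdet with hdet | hdet
    · rw [hdet] at key; nlinarith
    · rw [hdet] at key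
      rcases (show r + 1 < A ∨ r + 1 = A by omega) with hrA' | rfl
      · nlinarith
      · have := htwo hdet
        have := Int.eq_one_of_mul_eq_one_right (by omega)
          (by linear_combination key : (r + 1) * (C - q * m - m) = 1)
        omega

end ContinuantBounds

theorem exists_list_of_continuantBounds {p A C m : ℤ} (hb : ContinuantBounds p A C m)
    (hdet : p * m - A * C = 1 ∨ p * m - A * C = -1) :
    ∃ L : List ℤ, L ≠ [] ∧ (∀ q ∈ L, 0 < q) ∧
      cont L = p ∧ cont L.tail = A ∧ cont L.dropLast = C ∧ innerCont L = m := by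
  rcases hb.inner_nonneg.eq_or_lt with rfl | hm
  · have hA := hb.one_le_tail
    have hAC : A * C = 1 := by
      have := hb.one_le_dropLast
      rcases hdet with h | h <;> nlinarith
    obtain rfl : A = 1 := Int.eq_one_of_mul_eq_one_right (by omega) hAC
    obtain rfl : C = 1 := by simpa using hAC
    refine ⟨[p], List.cons_ne_nil _ _, fun q hq => ?_, rfl, rfl, rfl, rfl⟩
    rw [List.mem_singleton.mp hq]
    linarith [hb.tail_le]
  · have hA := hb.one_le_tail
    -- dividing `p - 1` rather than `p` keeps the next `A`, namely `r + 1`, in `[1, A]`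
    have hqr : A * ((p - 1) / A) + (p - 1) % A = p - 1 := Int.mul_ediv_add_emod _ _
    have hr := Int.emod_nonneg (p - 1) (by omega : A ≠ 0)
    have hrA := Int.emod_lt_of_pos (p - 1) (by omega : 0 < A)
    have hAp := hb.tail_lt hdet hm
    have hdet' : A * (C - (p - 1) / A * m) - ((p - 1) % A + 1) * m = -(p * m - A * C) := by
      linear_combination (-m) * hqr
    obtain ⟨M, hM, hMpos, hpM, hAM, hCM, hmM⟩ := exists_list_of_continuantBounds
      (hb.euclid_step hdet hm hqr hr hrA) (by rw [hdet']; omega)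
    refine ⟨(p - 1) / A :: M, List.cons_ne_nil _ _, ?_, ?_, hpM, ?_, ?_⟩
    · intro x hx
      rcases List.mem_cons.mp hx with rfl | hx
      · nlinarith
      · exact hMpos x hx
    · rw [cont_cons_of_ne_nil _ hM, hpM, hAM]; linear_combination hqr
    · rw [cont_dropLast_cons_of_ne_nil _ hM, hCM, hmM]; ring
    · rw [innerCont_cons_of_ne_nil _ hM, hCM]
termination_by p.toNat
decreasing_by omega

lemma not_isSquare_of_sq_lt_of_lt_sq {n d : ℤ} (hn : 0 ≤ n) (hlo : n ^ 2 < d)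
    (hhi : d < (n + 1) ^ 2) : ¬ IsSquare d := by
  rintro ⟨r, rfl⟩
  rw [← sq, sq_lt_sq, abs_of_nonneg hn] at hlo
  rw [← sq, sq_lt_sq, abs_of_nonneg (by omega : 0 ≤ n + 1)] at hhi
  omega

lemma not_isSquare_sq_add_four_s13 {s : ℤ} (hs : 0 < s) : ¬ IsSquare (s ^ 2 + 4) := by
  rcases (show s = 1 ∨ 2 ≤ s by omega) with rfl | hs
  · exact not_isSquare_of_sq_lt_of_lt_sq (n := 2) (by norm_num) (by norm_num) (by norm_num)
  · exact not_isSquare_of_sq_lt_of_lt_sq (n := s) (by omega) (by nlinarith) (by nlinarith)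

lemma not_isSquare_sq_sub_four_s13 {s : ℤ} (hs : 3 ≤ s) : ¬ IsSquare (s ^ 2 - 4) :=
  not_isSquare_of_sq_lt_of_lt_sq (n := s - 1) (by omega) (by nlinarith) (by nlinarith)

theorem isGPlus_of_continuantBounds {p A C m : ℤ} (hb : ContinuantBounds p A C m)
    (hdet : p * m - A * C = 1 ∨ p * m - A * C = -1) : (⟨A, p - m, -C⟩ : QF).IsGPlus := by
  have hdisc : (⟨A, p - m, -C⟩ : QF).disc = (p + m) ^ 2 - 4 * (p * m - A * C) := by
    simp only [QF.disc]; ring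
  have hreduced : |A + -C| < p - m := by rw [← sub_eq_add_neg]; exact hb.abs_sub_lt hdet
  obtain ⟨hA1, hAp, hC1, hCp, hm0, hmA, hmC⟩ := hb
  refine ⟨⟨⟨?_, ?_⟩, by simp only; nlinarith, hreduced⟩, hA1⟩
  · simp only [QF.disc]; nlinarith
  · rw [hdisc]
    rcases hdet with h | h <;> rw [h]
    · exact not_isSquare_sq_sub_four_s13 (by nlinarith)
    · simpa using not_isSquare_sq_add_four_s13 (s := p + m) (by omega)

theorem xiForm_disc (L : List ℤ) (hL : L ≠ []) :
    (xiForm L).disc = (cont L + innerCont L) ^ 2 + (-1 : ℤ) ^ (L.length + 1) * 4 := by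
  simp only [xiForm, QF.disc]
  rw [pow_succ (-1 : ℤ), ← cont_determinant L hL]
  ring

theorem xiForm_isGPlus (L : List ℤ) (hL : L ≠ []) (hpos : ∀ q ∈ L, 0 < q) :
    (xiForm L).IsGPlus :=
  isGPlus_of_continuantBounds (continuantBounds_cont L hL hpos)
    (cont_determinant L hL ▸ neg_one_pow_eq_or ℤ L.length)

theorem xiForm_isGamma (L : List ℤ) (hL : L ≠ []) (hpos : ∀ q ∈ L, 0 < q) :
    (xiForm L).IsGamma L := by
  have hb := continuantBounds_cont L hL hpos
  have hgap : (cont L + innerCont L) ^ 2 - (xiForm L).disc * 1 ^ 2 = (-1) ^ L.length * 4 := by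
    rw [xiForm_disc L hL, pow_succ (-1 : ℤ)]; ring
  refine ⟨cont L + innerCont L, 1, ⟨?_, one_pos, ?_, fun _ _ _ hu _ => hu⟩, ⟨hL, hpos, ?_⟩,
    fun h => ?_, fun h => ?_⟩
  · linarith [hb.one_le_tail, hb.tail_le, hb.inner_nonneg]
  · rw [hgap, abs_mul, abs_neg_one_pow]; norm_num
  · have hA : (cont L.tail : ℚ) ≠ 0 := by exact_mod_cast (hb.one_le_tail.trans_lt' one_pos).ne'
    simp only [xiForm]
    push_cast
    field_simp
    ring
  · rw [hgap] at h
    exact (neg_one_pow_eq_neg_one_iff_odd (R := ℤ) (by decide)).mp (by linarith)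
  · rw [hgap] at h
    exact (neg_one_pow_eq_one_iff_even (R := ℤ) (by decide)).mp (by linarith)

theorem exists_nonneg_mul_add_eq {B N : ℤ} (hB : 0 ≤ B) (hN : 0 ≤ N)
    (hsq : IsSquare (B ^ 2 + 4 * N)) : ∃ m, 0 ≤ m ∧ (B + m) * m = N := by
  obtain ⟨k, hk⟩ := hsq
  have hk' : |k| * |k| = B ^ 2 + 4 * N := by rw [abs_mul_abs_self]; exact hk.symm
  have hBk : B ≤ |k| := by nlinarith [abs_nonneg k]
  have hpar : Even (|k| - B) := by
    have : Even ((|k| - B) * (|k| + B)) := ⟨2 * N, by linear_combination hk'⟩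
    rw [Int.even_mul, Int.even_sub, Int.even_add] at this
    exact Int.even_sub.mpr (this.elim id id)
  obtain ⟨m, hm⟩ := hpar
  refine ⟨m, by omega, ?_⟩
  rw [show |k| = B + 2 * m by omega] at hk'
  linarith

theorem inner_le_and_le_of_sub_lt {A C B m : ℤ} (hA : 1 ≤ A) (hC : 1 ≤ C) (hm : 0 ≤ m)
    (hAC : A - C < B)
    (hdet : (B + m) * m - A * C = 1 ∨ (B + m) * m - A * C = -1) : m ≤ C ∧ A ≤ B + m := by
  have hmC : m ≤ C := by
    by_contra h
    rcases hdet with h' | h' <;> nlinarith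
  refine ⟨hmC, ?_⟩
  by_contra h
  rcases hdet with h' | h' <;> nlinarith

theorem continuantBounds_of_abs_sub_lt {A C B m : ℤ} (hA : 1 ≤ A) (hC : 1 ≤ C) (hm : 0 ≤ m)
    (hAC : |A - C| < B) (hdet : (B + m) * m - A * C = 1 ∨ (B + m) * m - A * C = -1) :
    ContinuantBounds (B + m) A C m := by
  rw [abs_lt] at hAC
  obtain ⟨hmC, hAp⟩ := inner_le_and_le_of_sub_lt hA hC hm (by linarith) hdet
  obtain ⟨hmA, hCp⟩ := inner_le_and_le_of_sub_lt hC hA hm (by linarith) (mul_comm A C ▸ hdet)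
  exact ⟨hA, hAp, hC, hCp, hm, hmA, hmC⟩

theorem exists_xiForm_eq (f : QF) (hf : f.IsGPlus) (δ : ℤ) (hδ : δ = 1 ∨ δ = -1)
    (hsq : IsSquare (f.disc + 4 * δ)) :
    ∃ L : List ℤ, L ≠ [] ∧ (∀ q ∈ L, 0 < q) ∧ xiForm L = f := by
  obtain ⟨A, B, C⟩ := f
  obtain ⟨⟨-, hAC, hB⟩, hA⟩ := hf
  dsimp only at hAC hB hA
  have hC : 0 < -C := by nlinarith
  have hB' : |A - -C| < B := by rwa [sub_neg_eq_add]
  obtain ⟨m, hm, hmB⟩ := exists_nonneg_mul_add_eq (N := A * -C + δ)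
    ((abs_nonneg _).trans hB.le) (by rcases hδ with rfl | rfl <;> nlinarith)
    (by convert hsq using 1; simp only [QF.disc]; ring)
  have hdet : (B + m) * m - A * -C = 1 ∨ (B + m) * m - A * -C = -1 := by
    rcases hδ with rfl | rfl
    · exact Or.inl (by linarith)
    · exact Or.inr (by linarith)
  obtain ⟨L, hL, hpos, hp, hA', hC', hm'⟩ :=
    exists_list_of_continuantBounds (continuantBounds_of_abs_sub_lt hA hC hm hB' hdet) hdet
  refine ⟨L, hL, hpos, ?_⟩
  simp only [xiForm, hp, hA', hC', hm', neg_neg, add_sub_cancel_right]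

/-- **Theorem (section of γ).** `ξ` is a section of `γ` landing in `G⁺`, its image
is the set of forms in `G⁺` of discriminant `k² ± 4`, and the discriminant of
`ξ((q₁,…,q_l))` is `([q₁,…,q_l] + [q₂,…,q_{l-1}])² + (-1)^{l+1}·4`.  In
particular `γ : G⁺ → S₁` is surjective. -/
theorem stmt13 :
    (∀ L : List ℤ, L ≠ [] → (∀ q ∈ L, 0 < q) →
      (xiForm L).IsGPlus ∧ (xiForm L).IsGamma L ∧
      (xiForm L).disc =
        (cont L + innerCont L) ^ 2 + (-1 : ℤ) ^ (L.length + 1) * 4) ∧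
    (∀ f : QF, f.IsGPlus →
      (∃ k : ℤ, f.disc = k ^ 2 + 4 ∨ f.disc = k ^ 2 - 4) →
      ∃ L : List ℤ, L ≠ [] ∧ (∀ q ∈ L, 0 < q) ∧ xiForm L = f) := by
  refine ⟨fun L hL hpos => ⟨xiForm_isGPlus L hL hpos, xiForm_isGamma L hL hpos,
    xiForm_disc L hL⟩, ?_⟩
  rintro f hf ⟨k, hk | hk⟩
  · exact exists_xiForm_eq f hf (-1) (Or.inr rfl) ⟨k, by rw [hk]; ring⟩
  · exact exists_xiForm_eq f hf 1 (Or.inl rfl) ⟨k, by rw [hk]; ring⟩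
end

section
/- If f and g are G-reduced forms with μ(f) = μ(g) and f ≠ g, then one of f and g is in G⁺ and the other is in G⁻; moreover, if g is in G⁻, then f = R_G(g) = g(−x+y, −x). Conversely, if g is in G⁻ and f = g(−x+y, −x), then μ(f) = μ(g). -/
lemma QF.ext' {f g : QF} (h1 : f.a = g.a) (h2 : f.b = g.b) (h3 : f.c = g.c) : f = g := by
  cases f; cases g; simp_all

lemma transform_eq (g : QF) :
    g.transform (-1) 1 (-1) 0 = ⟨g.a + g.b + g.c, -2 * g.a - g.b, g.a⟩ := by
  simp only [QF.transform, QF.mk.injEq]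
  refine ⟨by ring, by ring, by ring⟩

lemma mu_transform (g : QF) (hg : g.IsGMinus) :
    mu (g.transform (-1) 1 (-1) 0) = mu g := by
  obtain ⟨⟨hI, hac, hb⟩, haneg⟩ := hg
  have hb' := abs_lt.mp hb
  have hsum : 0 < g.a + g.b + g.c := by omega
  rw [transform_eq]
  simp only [mu]
  rw [if_neg (by omega : ¬ 0 < g.a), if_pos hsum]
  exact QF.ext' rfl (by show 2*(g.a+g.b+g.c) + (-2*g.a-g.b) = g.b + 2*g.c; ring)
    (by show (g.a+g.b+g.c) + (-2*g.a-g.b) + g.a = g.c; ring)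
/-- **Corollary.** If `f ≠ g` are G-reduced with `μ(f) = μ(g)`, then one lies in
`G⁺` and the other in `G⁻`; if `g ∈ G⁻` then `f = R_G(g) = g(-x+y, -x)`.
Conversely, if `g ∈ G⁻` and `f = g(-x+y, -x)`, then `μ(f) = μ(g)`. -/
theorem stmt17 :
    (∀ f g : QF, f.IsGReduced → g.IsGReduced → mu f = mu g → f ≠ g →
      ((f.IsGPlus ∧ g.IsGMinus) ∨ (f.IsGMinus ∧ g.IsGPlus)) ∧
      (g.IsGMinus → f = RG g ∧ f = g.transform (-1) 1 (-1) 0)) ∧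
    (∀ g : QF, g.IsGMinus → mu (g.transform (-1) 1 (-1) 0) = mu g) := by
  refine ⟨?_, fun g hg => mu_transform g hg⟩
  intro f g hf hg hmu hne
  obtain ⟨hfI, hfac, hfb⟩ := hf
  obtain ⟨hgI, hgac, hgb⟩ := hg
  have hfb' := abs_lt.mp hfb
  have hgb' := abs_lt.mp hgb
  have hfa0 : f.a ≠ 0 := by rintro h; rw [h] at hfac; simp at hfac
  have hga0 : g.a ≠ 0 := by rintro h; rw [h] at hgac; simp at hgac
  have same : ¬ ((0 < f.a) ↔ (0 < g.a)) := by
    intro hiff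
    apply hne
    refine QF.ext' ?_ ?_ ?_ <;>
    · by_cases hp : 0 < f.a
      · have hq := hiff.mp hp
        simp only [mu] at hmu
        rw [if_pos hp, if_pos hq] at hmu
        simp only [QF.mk.injEq] at hmu
        omega
      · have hq : ¬ 0 < g.a := fun h => hp (hiff.mpr h)
        simp only [mu] at hmu
        rw [if_neg hp, if_neg hq] at hmu
        simp only [QF.mk.injEq] at hmu
        omega
  constructor
  · by_cases hp : 0 < f.a
    · have hq : ¬ 0 < g.a := fun h => same ⟨fun _ => h, fun _ => hp⟩
      exact Or.inl ⟨⟨⟨hfI, hfac, hfb⟩, hp⟩, ⟨⟨hgI, hgac, hgb⟩, by omega⟩⟩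
    · have hq : 0 < g.a := by
        by_contra hq
        exact same ⟨fun h => absurd h hp, fun h => absurd h hq⟩
      exact Or.inr ⟨⟨⟨hfI, hfac, hfb⟩, by omega⟩, ⟨⟨hgI, hgac, hgb⟩, hq⟩⟩
  · intro hgm
    have hganeg : g.a < 0 := hgm.2
    have hp : 0 < f.a := by
      by_contra hp
      exact same ⟨fun h => absurd h hp, fun h => absurd h (by omega)⟩
    simp only [mu] at hmu
    rw [if_pos hp, if_neg (by omega : ¬ 0 < g.a)] at hmu
    simp only [QF.mk.injEq] at hmu
    have hfe : f = g.transform (-1) 1 (-1) 0 := by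
      rw [transform_eq]
      exact QF.ext' (show f.a = g.a + g.b + g.c by omega)
        (show f.b = -2 * g.a - g.b by omega) (show f.c = g.a by omega)
    -- integer inequalities
    have hfa : f.a = g.a + g.b + g.c := by omega
    have hfbv : f.b = -2 * g.a - g.b := by omega
    have hfcv : f.c = g.a := by omega
    have hB : 0 < g.b := lt_of_le_of_lt (abs_nonneg _) hgb
    have hsum : 0 < g.a + g.b + g.c := by omega
    have hKey : 4 * g.a + 2 * g.b + g.c < 0 := by omega
    have hC : 0 < g.c := by
      rcases lt_trichotomy g.c 0 with h | h | h
      · nlinarith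
      · rw [h, mul_zero] at hgac; exact absurd hgac (by norm_num)
      · exact h
    -- real analysis
    have hΔ : 0 < g.disc := hgI.1
    set s := Real.sqrt ((g.disc : ℤ) : ℝ) with hs
    have hs0 : 0 ≤ s := Real.sqrt_nonneg _
    have hs2 : s ^ 2 = ((g.disc : ℤ) : ℝ) := Real.sq_sqrt (by exact_mod_cast hΔ.le)
    have hd : ((g.disc : ℤ) : ℝ) = (g.b : ℝ) ^ 2 - 4 * (g.a : ℝ) * (g.c : ℝ) := by
      simp only [QF.disc]; push_cast; ring
    have hgaR : (g.a : ℝ) < 0 := by exact_mod_cast hganeg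
    have hsumR : (0 : ℝ) < (g.a : ℝ) + g.b + g.c := by exact_mod_cast hsum
    have hKeyR : 4 * (g.a : ℝ) + 2 * g.b + (g.c : ℝ) < 0 := by exact_mod_cast hKey
    have hupZ : 0 < -4 * g.a - g.b := by omega
    have hupZR : (0 : ℝ) < -4 * (g.a : ℝ) - g.b := by exact_mod_cast hupZ
    have hup : s < -4 * (g.a : ℝ) - g.b := by
      nlinarith [hs2, hs0, hd, sq_nonneg (s + (-4 * (g.a : ℝ) - g.b))]
    have hlow : -2 * (g.a : ℝ) ≤ (g.b : ℝ) + s := by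
      nlinarith [hs2, hs0, hd, sq_nonneg (s + (-2 * (g.a : ℝ) - g.b))]
    have habs : |(g.a : ℝ)| = -(g.a : ℝ) := abs_of_neg hgaR
    have hpos : (0 : ℝ) < 2 * |(g.a : ℝ)| := by rw [habs]; linarith
    have hfl : ⌊((g.b : ℝ) + s) / (2 * |(g.a : ℝ)|)⌋ = 1 := by
      rw [Int.floor_eq_iff]
      constructor
      · rw [le_div_iff₀ hpos, habs]; push_cast; linarith
      · rw [div_lt_iff₀ hpos, habs]; push_cast; linarith
    have hδ : gaussDelta g = -1 := by
      rw [gaussDelta, ← hs, hfl, Int.sign_eq_neg_one_iff_neg.mpr hganeg]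
      norm_num
    refine ⟨?_, hfe⟩
    rw [RG, hδ]
    exact hfe
end
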